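/- If a 2D Riemannian torus with metric e^{2μ}(dx²+dy²) admits an irreducible rank 2 Killing tensor field, then there is a constant vector c ≠ 0 such that the system v_x = e^{2μ}(c¹μ_x + c²μ_y), v_y = e^{2μ}(c²μ_x − c¹μ_y) is solvable; with coordinates chosen so that c = (1,0), this is equivalent to ∂²(e^{2μ})/∂x∂y = 0, i.e., e^{2μ} = a(x) + b(y) for functions a, b. -/

import Mathlib

open scoped BigOperators

/-- Partial derivative `∂_p` (`p = 0 ↦ ∂ₓ`, `p = 1 ↦ ∂_y`). -/
noncomputable def pder (p : Fin 2) (f : ℝ × ℝ → ℝ) (q : ℝ × ℝ) : ℝ :=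
  fderiv ℝ f q (if p = 0 then ((1 : ℝ), (0 : ℝ)) else (0, 1))

/-- Christoffel symbols `Γ^r_{p i}` of the metric `e^{2μ}(dx² + dy²)`. -/
noncomputable def chr (μ : ℝ × ℝ → ℝ) (p i r : Fin 2) (q : ℝ × ℝ) : ℝ :=
  if r = 0 then
    (if p = i then (if p = 0 then pder 0 μ q else -(pder 0 μ q)) else pder 1 μ q)
  else
    (if p = i then (if p = 0 then -(pder 1 μ q) else pder 1 μ q) else pder 0 μ q)

/-- Covariant derivative `∇_p w_i` of a covector field. -/
noncomputable def cov1 (μ : ℝ × ℝ → ℝ) (w : Fin 2 → ℝ × ℝ → ℝ) (p i : Fin 2)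
    (q : ℝ × ℝ) : ℝ :=
  pder p (w i) q - ∑ r, chr μ p i r q * w r q

/-- Covariant derivative `∇_p h_{ij}` of a 2-tensor field. -/
noncomputable def cov2 (μ : ℝ × ℝ → ℝ) (h : Fin 2 → Fin 2 → ℝ × ℝ → ℝ)
    (p i j : Fin 2) (q : ℝ × ℝ) : ℝ :=
  pder p (h i j) q - ∑ r, chr μ p i r q * h r j q - ∑ r, chr μ p j r q * h i r q

/-- `w` is a Killing covector field: `σ∇w = 0`. -/
def Killing1 (μ : ℝ × ℝ → ℝ) (w : Fin 2 → ℝ × ℝ → ℝ) : Prop :=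
  ∀ p i q, cov1 μ w p i q + cov1 μ w i p q = 0

/-- `h` is a Killing symmetric 2-tensor field: `σ∇h = 0`. -/
def Killing2 (μ : ℝ × ℝ → ℝ) (h : Fin 2 → Fin 2 → ℝ × ℝ → ℝ) : Prop :=
  (∀ i j q, h i j q = h j i q) ∧
    ∀ i j k q, cov2 μ h i j k q + cov2 μ h j k i q + cov2 μ h k i j q = 0

/-- `h` is a reducible rank 2 Killing field: a finite sum of symmetric products of
Killing covector fields. -/
def Reducible2 (μ : ℝ × ℝ → ℝ) (h : Fin 2 → Fin 2 → ℝ × ℝ → ℝ) : Prop :=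
  ∃ (N : ℕ) (u v : Fin N → Fin 2 → ℝ × ℝ → ℝ),
    (∀ t, Killing1 μ (u t) ∧ Killing1 μ (v t)) ∧
    ∀ i j q, h i j q = ∑ t, (u t i q * v t j q + u t j q * v t i q) / 2

/-- `h` is an irreducible rank 2 Killing tensor field: Killing, not reducible, and not a
constant multiple of the metric tensor `e^{2μ}δ_{ij}`. -/
def Irreducible2 (μ : ℝ × ℝ → ℝ) (h : Fin 2 → Fin 2 → ℝ × ℝ → ℝ) : Prop :=
  Killing2 μ h ∧ ¬ Reducible2 μ h ∧
    ∀ c : ℝ, ¬ ∀ i j q, h i j q = c * Real.exp (2 * μ q) * (if i = j then 1 else 0)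
section Infra
open Real Set Bornology

lemma pder0 (f : ℝ × ℝ → ℝ) (q) : pder 0 f q = fderiv ℝ f q (1, 0) := rfl
lemma pder1 (f : ℝ × ℝ → ℝ) (q) : pder 1 f q = fderiv ℝ f q (0, 1) := by
  simp [pder]

lemma contDiff_diffAt {f : ℝ × ℝ → ℝ} (hf : ContDiff ℝ (⊤ : ℕ∞) f) (q : ℝ × ℝ) :
    DifferentiableAt ℝ f q := (hf.differentiable (by simp)).differentiableAt

lemma pder_smooth {f : ℝ × ℝ → ℝ} (hf : ContDiff ℝ (⊤ : ℕ∞) f) (p : Fin 2) :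
    ContDiff ℝ (⊤ : ℕ∞) (pder p f) := by
  have h1 : ContDiff ℝ (⊤ : ℕ∞) (fderiv ℝ f) := hf.fderiv_right (by simp)
  exact h1.clm_apply contDiff_const

lemma pder_add {f g : ℝ × ℝ → ℝ} (hf : DifferentiableAt ℝ f q) (hg : DifferentiableAt ℝ g q)
    (p : Fin 2) : pder p (fun x => f x + g x) q = pder p f q + pder p g q := by
  simp [pder, fderiv_fun_add hf hg]

lemma pder_sub {f g : ℝ × ℝ → ℝ} (hf : DifferentiableAt ℝ f q) (hg : DifferentiableAt ℝ g q)
    (p : Fin 2) : pder p (fun x => f x - g x) q = pder p f q - pder p g q := by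
  simp [pder, fderiv_fun_sub hf hg]

lemma pder_mul {f g : ℝ × ℝ → ℝ} (hf : DifferentiableAt ℝ f q) (hg : DifferentiableAt ℝ g q)
    (p : Fin 2) : pder p (fun x => f x * g x) q = pder p f q * g q + f q * pder p g q := by
  simp [pder, fderiv_fun_mul hf hg]; ring

lemma pder_const (c : ℝ) (p : Fin 2) (q : ℝ × ℝ) : pder p (fun _ => c) q = 0 := by
  simp [pder]

lemma pder_const_mul {f : ℝ × ℝ → ℝ} (hf : DifferentiableAt ℝ f q) (c : ℝ)
    (p : Fin 2) : pder p (fun x => c * f x) q = c * pder p f q := by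
  simp [pder, fderiv_const_mul hf]

lemma pder_exp {μ : ℝ × ℝ → ℝ} (hμ : ContDiff ℝ (⊤ : ℕ∞) μ) (c : ℝ) (p : Fin 2) (q : ℝ × ℝ) :
    pder p (fun x => Real.exp (c * μ x)) q = c * pder p μ q * Real.exp (c * μ q) := by
  have h1 : DifferentiableAt ℝ (fun x => c * μ x) q :=
    (contDiff_diffAt hμ q).const_mul c
  have h2 : HasFDerivAt (fun x => Real.exp (c * μ x))
      (Real.exp (c * μ q) • fderiv ℝ (fun x => c * μ x) q) q :=
    by have := (Real.hasDerivAt_exp (c * μ q)).comp_hasFDerivAt q h1.hasFDerivAt; exact this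
  simp only [pder, h2.fderiv]
  rw [fderiv_const_mul (contDiff_diffAt hμ q)]
  simp [pder]; ring

lemma smooth_exp_mul {μ : ℝ × ℝ → ℝ} (hμ : ContDiff ℝ (⊤ : ℕ∞) μ) (c : ℝ) :
    ContDiff ℝ (⊤ : ℕ∞) (fun x => Real.exp (c * μ x)) :=
  Real.contDiff_exp.comp (contDiff_const.mul hμ)

lemma fderiv_eq_zero_of_pder {f : ℝ × ℝ → ℝ} (hf : DifferentiableAt ℝ f q)
    (h0 : pder 0 f q = 0) (h1 : pder 1 f q = 0) : fderiv ℝ f q = 0 := by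
  refine ContinuousLinearMap.ext fun w => ?_
  show fderiv ℝ f q w = 0
  have hw : w = w.1 • ((1 : ℝ), (0 : ℝ)) + w.2 • ((0 : ℝ), (1 : ℝ)) := by
    simp [Prod.ext_iff]
  rw [pder0] at h0; rw [pder1] at h1
  rw [hw]
  simp only [map_add, map_smul, smul_eq_mul]
  rw [h0, h1]; ring


lemma const_of_pder_zero {f : ℝ × ℝ → ℝ} (hf : ContDiff ℝ (⊤ : ℕ∞) f)
    (h : ∀ q, pder 0 f q = 0 ∧ pder 1 f q = 0) (q q' : ℝ × ℝ) : f q = f q' := by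
  apply is_const_of_fderiv_eq_zero (hf.differentiable (by simp))
  intro x
  exact fderiv_eq_zero_of_pder (contDiff_diffAt hf x) (h x).1 (h x).2

lemma pder_pder {f : ℝ × ℝ → ℝ} (hf : ContDiff ℝ (⊤ : ℕ∞) f) (p r : Fin 2) (q : ℝ × ℝ) :
    pder p (pder r f) q
      = fderiv ℝ (fderiv ℝ f) q (if p = 0 then ((1:ℝ),(0:ℝ)) else (0,1))
          (if r = 0 then ((1:ℝ),(0:ℝ)) else (0,1)) := by
  have hc : DifferentiableAt ℝ (fderiv ℝ f) q :=
    ((hf.fderiv_right (m := (⊤ : ℕ∞)) (by simp)).differentiable (by simp)).differentiableAt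
  have hu : DifferentiableAt ℝ (fun _ : ℝ × ℝ => (if r = 0 then ((1:ℝ),(0:ℝ)) else (0,1))) q :=
    differentiableAt_const _
  have he : pder r f = fun y => fderiv ℝ f y (if r = 0 then ((1:ℝ),(0:ℝ)) else (0,1)) := rfl
  rw [show pder p (pder r f) q
      = fderiv ℝ (fun y => fderiv ℝ f y (if r = 0 then ((1:ℝ),(0:ℝ)) else (0,1))) q
        (if p = 0 then ((1:ℝ),(0:ℝ)) else (0,1)) from by rw [pder, he]]
  rw [fderiv_clm_apply hc hu]
  simp

lemma pder_comm {f : ℝ × ℝ → ℝ} (hf : ContDiff ℝ (⊤ : ℕ∞) f) (q : ℝ × ℝ) :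
    pder 0 (pder 1 f) q = pder 1 (pder 0 f) q := by
  rw [pder_pder hf, pder_pder hf]
  have hsymm := second_derivative_symmetric (f := f) (f' := fderiv ℝ f)
    (f'' := fderiv ℝ (fderiv ℝ f) q) (x := q)
    (fun y => (contDiff_diffAt hf y).hasFDerivAt)
    (((hf.fderiv_right (m := (⊤ : ℕ∞)) (by simp)).differentiable (by simp)).differentiableAt).hasFDerivAt
  simpa using hsymm ((1:ℝ),(0:ℝ)) ((0:ℝ),(1:ℝ))

end Infra


section Per
open Real Set Bornology

lemma periodic_int {E : Type*} (f : ℝ × ℝ → E) (γ : ℝ × ℝ)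
    (hp : ∀ q, f (q + γ) = f q) : ∀ (n : ℤ) (q), f (q + n • γ) = f q := by
  intro n
  induction n using Int.induction_on with
  | zero => simp
  | succ n ih => intro q
                 have : q + ((n : ℤ) + 1) • γ = (q + γ) + (n : ℤ) • γ := by
                   push_cast; rw [add_smul]; abel
                 rw [this, ih, hp]
  | pred n ih => intro q
                 have h : q + (-(n : ℤ) - 1) • γ = (q - γ) + (-(n : ℤ)) • γ := by
                   rw [sub_smul, one_smul]; abel
                 rw [h, ih]
                 have h2 := hp (q - γ); rw [sub_add_cancel] at h2; exact h2.symm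

lemma bounded_of_periodic {E : Type*} [NormedAddCommGroup E] (γ₁ γ₂ : ℝ × ℝ)
    (hind : LinearIndependent ℝ ![γ₁, γ₂]) (f : ℝ × ℝ → E) (hf : Continuous f)
    (hp : ∀ q, f (q + γ₁) = f q ∧ f (q + γ₂) = f q) :
    ∃ C, ∀ q, ‖f q‖ ≤ C := by
  have h1 := periodic_int f γ₁ (fun q => (hp q).1)
  have h2 := periodic_int f γ₂ (fun q => (hp q).2)
  set B := basisOfLinearIndependentOfCardEqFinrank hind
    (by simp [Fintype.card_fin]) with hB
  have hBc : ∀ i, B i = ![γ₁, γ₂] i := fun i => by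
    rw [hB, coe_basisOfLinearIndependentOfCardEqFinrank]
  set K : Set (ℝ × ℝ) := (fun p : ℝ × ℝ => p.1 • γ₁ + p.2 • γ₂) '' (Icc 0 1 ×ˢ Icc 0 1)
    with hK
  have hKc : IsCompact K := (isCompact_Icc.prod isCompact_Icc).image
    (((continuous_fst.smul continuous_const).add (continuous_snd.smul continuous_const)))
  have hKb := (hKc.image hf).isBounded
  rw [isBounded_iff_forall_norm_le] at hKb
  obtain ⟨C, hC⟩ := hKb
  refine ⟨C, fun q => ?_⟩
  set s := B.repr q 0 with hs
  set t := B.repr q 1 with ht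
  have hq : q = s • γ₁ + t • γ₂ := by
    have := B.sum_repr q
    rw [Fin.sum_univ_two, hBc 0, hBc 1] at this
    simpa using this.symm
  have key : f q = f (Int.fract s • γ₁ + Int.fract t • γ₂) := by
    have hdec : q = (Int.fract s • γ₁ + Int.fract t • γ₂) + (⌊t⌋ • γ₂ + ⌊s⌋ • γ₁) := by
      rw [hq]
      have hs' : s • γ₁ = Int.fract s • γ₁ + (⌊s⌋ : ℤ) • γ₁ := by
        rw [← Int.cast_smul_eq_zsmul ℝ, ← add_smul]
        congr 1
        exact (Int.fract_add_floor s).symm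
      have ht' : t • γ₂ = Int.fract t • γ₂ + (⌊t⌋ : ℤ) • γ₂ := by
        rw [← Int.cast_smul_eq_zsmul ℝ, ← add_smul]
        congr 1
        exact (Int.fract_add_floor t).symm
      rw [hs', ht']; abel
    rw [hdec, ← add_assoc, h1, h2]
  rw [key]
  apply hC
  refine ⟨_, ⟨(Int.fract s, Int.fract t), ?_, rfl⟩, rfl⟩
  exact ⟨⟨Int.fract_nonneg s, (Int.fract_lt_one s).le⟩,
         ⟨Int.fract_nonneg t, (Int.fract_lt_one t).le⟩⟩

end Per

section CR
open Real Set Bornology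
lemma const_of_CR (P Q : ℝ × ℝ → ℝ) (hP : ContDiff ℝ (⊤ : ℕ∞) P) (hQ : ContDiff ℝ (⊤ : ℕ∞) Q)
    (hPb : ∃ C, ∀ q, ‖P q‖ ≤ C) (hQb : ∃ C, ∀ q, ‖Q q‖ ≤ C)
    (hCR : ∀ q, pder 0 P q = pder 1 Q q ∧ pder 1 P q = -(pder 0 Q q)) :
    ∀ q, P q = P 0 ∧ Q q = Q 0 := by
  set e : ℂ →L[ℝ] ℝ × ℝ := Complex.equivRealProdCLM.toContinuousLinearMap with he
  set f : ℂ → ℂ := fun z => (P (z.re, z.im) : ℂ) + (Q (z.re, z.im) : ℂ) * Complex.I with hf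
  have hdiff : Differentiable ℂ f := by
    intro z
    set q : ℝ × ℝ := (z.re, z.im) with hq
    set d : ℂ := (pder 0 P q : ℂ) + (pder 0 Q q : ℂ) * Complex.I with hd
    -- real derivative
    have hPq : HasFDerivAt (fun w : ℂ => P (w.re, w.im))
        ((fderiv ℝ P q).comp e) z := by
      have h1 : HasFDerivAt e e z := e.hasFDerivAt
      have h2 : HasFDerivAt P (fderiv ℝ P q) (e z) := by
        have : e z = q := rfl
        rw [this]; exact (contDiff_diffAt hP q).hasFDerivAt
      exact h2.comp z h1
    have hQq : HasFDerivAt (fun w : ℂ => Q (w.re, w.im))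
        ((fderiv ℝ Q q).comp e) z := by
      have h1 : HasFDerivAt e e z := e.hasFDerivAt
      have h2 : HasFDerivAt Q (fderiv ℝ Q q) (e z) := by
        have : e z = q := rfl
        rw [this]; exact (contDiff_diffAt hQ q).hasFDerivAt
      exact h2.comp z h1
    have hPc : HasFDerivAt (fun w : ℂ => (P (w.re, w.im) : ℂ))
        (Complex.ofRealCLM.comp ((fderiv ℝ P q).comp e)) z :=
      Complex.ofRealCLM.hasFDerivAt.comp z hPq
    have hQc : HasFDerivAt (fun w : ℂ => (Q (w.re, w.im) : ℂ) * Complex.I)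
        (Complex.I • (Complex.ofRealCLM.comp ((fderiv ℝ Q q).comp e))) z :=
      (Complex.ofRealCLM.hasFDerivAt.comp z hQq).mul_const Complex.I
    have hsum : HasFDerivAt f
        ((Complex.ofRealCLM.comp ((fderiv ℝ P q).comp e)) +
          Complex.I • (Complex.ofRealCLM.comp ((fderiv ℝ Q q).comp e))) z :=
      hPc.add hQc
    have hC : HasFDerivAt f ((1 : ℂ →L[ℂ] ℂ).smulRight d) z := by
      apply hasFDerivAt_of_restrictScalars ℝ hsum
      refine ContinuousLinearMap.ext fun w => ?_
      have hw : (w.re, w.im) = w.re • ((1:ℝ),(0:ℝ)) + w.im • ((0:ℝ),(1:ℝ)) := by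
        simp [Prod.ext_iff]
      have hPw : fderiv ℝ P q (w.re, w.im)
          = w.re * pder 0 P q + w.im * pder 1 P q := by
        rw [hw, map_add, map_smul, map_smul]
        show w.re • fderiv ℝ P q (1, 0) + w.im • fderiv ℝ P q (0, 1) = _
        rw [show pder 0 P q = fderiv ℝ P q (1, 0) from rfl,
            show pder 1 P q = fderiv ℝ P q (0, 1) from by simp [pder]]
        simp [smul_eq_mul]
      have hQw : fderiv ℝ Q q (w.re, w.im)
          = w.re * pder 0 Q q + w.im * pder 1 Q q := by
        rw [hw, map_add, map_smul, map_smul]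
        show w.re • fderiv ℝ Q q (1, 0) + w.im • fderiv ℝ Q q (0, 1) = _
        rw [show pder 0 Q q = fderiv ℝ Q q (1, 0) from rfl,
            show pder 1 Q q = fderiv ℝ Q q (0, 1) from by simp [pder]]
        simp [smul_eq_mul]
      have hL : (((1 : ℂ →L[ℂ] ℂ).smulRight d).restrictScalars ℝ) w = w * d := by
        simp
      have hR : (Complex.ofRealCLM.comp ((fderiv ℝ P q).comp e) +
          Complex.I • (Complex.ofRealCLM.comp ((fderiv ℝ Q q).comp e))) w
          = (fderiv ℝ P q (w.re, w.im) : ℂ)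
            + Complex.I * (fderiv ℝ Q q (w.re, w.im) : ℂ) := by
        simp only [ContinuousLinearMap.add_apply, ContinuousLinearMap.smul_apply,
          ContinuousLinearMap.comp_apply, Complex.ofRealCLM_apply, smul_eq_mul]
        rfl
      rw [hL, hR, hPw, hQw, hd, (hCR q).1, (hCR q).2]
      push_cast
      apply Complex.ext <;> simp <;> ring
    exact hC.differentiableAt
  have hbdd : IsBounded (range f) := by
    obtain ⟨C1, hC1⟩ := hPb
    obtain ⟨C2, hC2⟩ := hQb
    rw [isBounded_iff_forall_norm_le]
    refine ⟨C1 + C2, ?_⟩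
    rintro x ⟨z, rfl⟩
    calc ‖f z‖ ≤ ‖(P (z.re, z.im) : ℂ)‖ + ‖(Q (z.re, z.im) : ℂ) * Complex.I‖ := norm_add_le _ _
      _ ≤ C1 + C2 := by
          simp only [norm_mul, Complex.norm_I, mul_one, Complex.norm_real]
          exact add_le_add (hC1 _) (hC2 _)
  intro q
  have := hdiff.apply_eq_apply_of_bounded hbdd (q.1 + q.2 * Complex.I) 0
  rw [hf] at this
  simp only [Complex.add_re, Complex.add_im, Complex.mul_re, Complex.mul_im,
    Complex.ofReal_re, Complex.ofReal_im, Complex.I_re, Complex.I_im,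
    Complex.zero_re, Complex.zero_im] at this
  norm_num at this
  rw [Complex.ext_iff] at this
  simp only [Complex.add_re, Complex.add_im, Complex.mul_re, Complex.mul_im,
    Complex.ofReal_re, Complex.ofReal_im, Complex.I_re, Complex.I_im] at this
  constructor
  · have h := this.1; norm_num at h; convert h using 2 <;> simp [Prod.ext_iff]
  · have h := this.2; norm_num at h; convert h using 2 <;> simp [Prod.ext_iff]

end CR

section KEq
variable {μ : ℝ × ℝ → ℝ} {h : Fin 2 → Fin 2 → ℝ × ℝ → ℝ}

lemma kE1 (hK : Killing2 μ h) (q : ℝ × ℝ) :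
    pder 0 (h 0 0) q = 2 * pder 0 μ q * h 0 0 q - 2 * pder 1 μ q * h 0 1 q := by
  have hsf : h 1 0 = h 0 1 := funext fun q => hK.1 1 0 q
  have e := hK.2 0 0 0 q
  simp only [cov2, chr, Fin.sum_univ_two] at e
  norm_num at e
  rw [hsf] at e
  linarith

lemma kE2 (hK : Killing2 μ h) (q : ℝ × ℝ) :
    pder 1 (h 1 1) q = 2 * pder 1 μ q * h 1 1 q - 2 * pder 0 μ q * h 0 1 q := by
  have hsf : h 1 0 = h 0 1 := funext fun q => hK.1 1 0 q
  have e := hK.2 1 1 1 q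
  simp only [cov2, chr, Fin.sum_univ_two] at e
  norm_num at e
  rw [hsf] at e
  linarith

lemma kE3 (hK : Killing2 μ h) (q : ℝ × ℝ) :
    pder 1 (h 0 0) q = -2 * pder 0 (h 0 1) q + 6 * pder 0 μ q * h 0 1 q
      + 4 * pder 1 μ q * h 0 0 q - 2 * pder 1 μ q * h 1 1 q := by
  have hsf : h 1 0 = h 0 1 := funext fun q => hK.1 1 0 q
  have e := hK.2 0 0 1 q
  simp only [cov2, chr, Fin.sum_univ_two] at e
  norm_num at e
  rw [hsf] at e
  linarith

lemma kE4 (hK : Killing2 μ h) (q : ℝ × ℝ) :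
    pder 0 (h 1 1) q = -2 * pder 1 (h 0 1) q + 6 * pder 1 μ q * h 0 1 q
      - 2 * pder 0 μ q * h 0 0 q + 4 * pder 0 μ q * h 1 1 q := by
  have hsf : h 1 0 = h 0 1 := funext fun q => hK.1 1 0 q
  have e := hK.2 0 1 1 q
  simp only [cov2, chr, Fin.sum_univ_two] at e
  norm_num at e
  rw [hsf] at e
  linarith

end KEq

section Part1
open Real

lemma part1 (γ₁ γ₂ : ℝ × ℝ) (hind : LinearIndependent ℝ ![γ₁, γ₂])
    (μ : ℝ × ℝ → ℝ) (hμ : ContDiff ℝ (⊤ : ℕ∞) μ)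
    (hμp : ∀ q, μ (q + γ₁) = μ q ∧ μ (q + γ₂) = μ q)
    (h : Fin 2 → Fin 2 → ℝ × ℝ → ℝ) (hsm : ∀ i j, ContDiff ℝ (⊤ : ℕ∞) (h i j))
    (hp : ∀ i j q, h i j (q + γ₁) = h i j q ∧ h i j (q + γ₂) = h i j q)
    (hirr : Irreducible2 μ h) :
    ∃ c : ℝ × ℝ, c ≠ 0 ∧
      ∃ v : ℝ × ℝ → ℝ, ContDiff ℝ (⊤ : ℕ∞) v ∧
        (∀ q, v (q + γ₁) = v q ∧ v (q + γ₂) = v q) ∧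
        ∀ q, pder 0 v q = Real.exp (2 * μ q) * (c.1 * pder 0 μ q + c.2 * pder 1 μ q) ∧
             pder 1 v q = Real.exp (2 * μ q) * (c.2 * pder 0 μ q - c.1 * pder 1 μ q) := by
  obtain ⟨hK2, _, hnc⟩ := hirr
  have hd : ∀ (i j : Fin 2) q, DifferentiableAt ℝ (h i j) q :=
    fun i j q => contDiff_diffAt (hsm i j) q
  have hsmD : ContDiff ℝ (⊤ : ℕ∞) (fun x => h 0 0 x - h 1 1 x) := (hsm 0 0).sub (hsm 1 1)
  have hsmS : ContDiff ℝ (⊤ : ℕ∞) (fun x => 2 * h 0 1 x) := contDiff_const.mul (hsm 0 1)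
  have hsmX : ContDiff ℝ (⊤ : ℕ∞) (fun x => Real.exp ((-4) * μ x)) := smooth_exp_mul hμ _
  have hsmP : ContDiff ℝ (⊤ : ℕ∞) (fun x => Real.exp ((-4) * μ x) * (h 0 0 x - h 1 1 x)) :=
    hsmX.mul hsmD
  have hsmQ : ContDiff ℝ (⊤ : ℕ∞) (fun x => Real.exp ((-4) * μ x) * (2 * h 0 1 x)) :=
    hsmX.mul hsmS
  have hPp : ∀ (p : Fin 2) q, pder p (fun x => Real.exp ((-4)*μ x) * (h 0 0 x - h 1 1 x)) q
      = (-4) * pder p μ q * Real.exp ((-4)*μ q) * (h 0 0 q - h 1 1 q)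
        + Real.exp ((-4)*μ q) * (pder p (h 0 0) q - pder p (h 1 1) q) := by
    intro p q
    rw [pder_mul (contDiff_diffAt hsmX q) (contDiff_diffAt hsmD q), pder_exp hμ,
        pder_sub (hd 0 0 q) (hd 1 1 q)]
  have hQp : ∀ (p : Fin 2) q, pder p (fun x => Real.exp ((-4)*μ x) * (2 * h 0 1 x)) q
      = (-4) * pder p μ q * Real.exp ((-4)*μ q) * (2 * h 0 1 q)
        + Real.exp ((-4)*μ q) * (2 * pder p (h 0 1) q) := by
    intro p q
    rw [pder_mul (contDiff_diffAt hsmX q) (contDiff_diffAt hsmS q), pder_exp hμ,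
        pder_const_mul (hd 0 1 q)]
  have hCR : ∀ q, pder 0 (fun x => Real.exp ((-4)*μ x) * (h 0 0 x - h 1 1 x)) q
        = pder 1 (fun x => Real.exp ((-4)*μ x) * (2 * h 0 1 x)) q
      ∧ pder 1 (fun x => Real.exp ((-4)*μ x) * (h 0 0 x - h 1 1 x)) q
        = -(pder 0 (fun x => Real.exp ((-4)*μ x) * (2 * h 0 1 x)) q) := by
    intro q
    constructor
    · rw [hPp, hQp]
      linear_combination Real.exp ((-4)*μ q) * (kE1 hK2 q) - Real.exp ((-4)*μ q) * (kE4 hK2 q)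
    · rw [hPp, hQp]
      linear_combination Real.exp ((-4)*μ q) * (kE3 hK2 q) - Real.exp ((-4)*μ q) * (kE2 hK2 q)
  have hPper : ∀ q, (fun x => Real.exp ((-4)*μ x) * (h 0 0 x - h 1 1 x)) (q + γ₁)
        = (fun x => Real.exp ((-4)*μ x) * (h 0 0 x - h 1 1 x)) q
      ∧ (fun x => Real.exp ((-4)*μ x) * (h 0 0 x - h 1 1 x)) (q + γ₂)
        = (fun x => Real.exp ((-4)*μ x) * (h 0 0 x - h 1 1 x)) q := by
    intro q
    constructor
    · show Real.exp ((-4)*μ (q+γ₁)) * (h 0 0 (q+γ₁) - h 1 1 (q+γ₁)) = _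
      rw [(hμp q).1, (hp 0 0 q).1, (hp 1 1 q).1]
    · show Real.exp ((-4)*μ (q+γ₂)) * (h 0 0 (q+γ₂) - h 1 1 (q+γ₂)) = _
      rw [(hμp q).2, (hp 0 0 q).2, (hp 1 1 q).2]
  have hQper : ∀ q, (fun x => Real.exp ((-4)*μ x) * (2 * h 0 1 x)) (q + γ₁)
        = (fun x => Real.exp ((-4)*μ x) * (2 * h 0 1 x)) q
      ∧ (fun x => Real.exp ((-4)*μ x) * (2 * h 0 1 x)) (q + γ₂)
        = (fun x => Real.exp ((-4)*μ x) * (2 * h 0 1 x)) q := by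
    intro q
    constructor
    · show Real.exp ((-4)*μ (q+γ₁)) * (2 * h 0 1 (q+γ₁)) = _
      rw [(hμp q).1, (hp 0 1 q).1]
    · show Real.exp ((-4)*μ (q+γ₂)) * (2 * h 0 1 (q+γ₂)) = _
      rw [(hμp q).2, (hp 0 1 q).2]
  have hconst := const_of_CR _ _ hsmP hsmQ
    (bounded_of_periodic γ₁ γ₂ hind _ hsmP.continuous hPper)
    (bounded_of_periodic γ₁ γ₂ hind _ hsmQ.continuous hQper)
    hCR
  have hA : ∀ q, Real.exp ((-4)*μ q) * (h 0 0 q - h 1 1 q)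
      = Real.exp ((-4)*μ (0:ℝ×ℝ)) * (h 0 0 (0:ℝ×ℝ) - h 1 1 (0:ℝ×ℝ)) :=
    fun q => (hconst q).1
  have hB : ∀ q, Real.exp ((-4)*μ q) * (2 * h 0 1 q)
      = Real.exp ((-4)*μ (0:ℝ×ℝ)) * (2 * h 0 1 (0:ℝ×ℝ)) :=
    fun q => (hconst q).2
  set A := Real.exp ((-4)*μ (0:ℝ×ℝ)) * (h 0 0 (0:ℝ×ℝ) - h 1 1 (0:ℝ×ℝ)) with hAdef
  set B := Real.exp ((-4)*μ (0:ℝ×ℝ)) * (2 * h 0 1 (0:ℝ×ℝ)) with hBdef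
  -- derivative identities for h 0 1 from constancy of Q
  have hQconst : (fun x => Real.exp ((-4)*μ x) * (2 * h 0 1 x)) = fun _ => B :=
    funext fun q => hB q
  have hbder : ∀ (p : Fin 2) q, pder p (h 0 1) q = 4 * pder p μ q * h 0 1 q := by
    intro p q
    have e : (0:ℝ) = (-4) * pder p μ q * Real.exp ((-4)*μ q) * (2 * h 0 1 q)
        + Real.exp ((-4)*μ q) * (2 * pder p (h 0 1) q) := by
      rw [← hQp p q, hQconst]
      exact (pder_const B p q).symm
    have e2 : Real.exp ((-4)*μ q) * (2 * pder p (h 0 1) q - 8 * pder p μ q * h 0 1 q) = 0 := by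
      linear_combination -e
    have e3 := (mul_eq_zero.mp e2).resolve_left (Real.exp_ne_zero _)
    linarith
  by_cases hAB : A = 0 ∧ B = 0
  · -- degenerate: h is a constant multiple of the metric, contradiction
    exfalso
    have hD0 : ∀ q, h 1 1 q = h 0 0 q := by
      intro q
      have e := hA q; rw [hAB.1] at e
      rcases mul_eq_zero.mp e with e' | e'
      · exact absurd e' (Real.exp_ne_zero _)
      · linarith
    have hb0 : ∀ q, h 0 1 q = 0 := by
      intro q
      have e := hB q; rw [hAB.2] at e
      rcases mul_eq_zero.mp e with e' | e'
      · exact absurd e' (Real.exp_ne_zero _)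
      · linarith
    have hsmφ : ContDiff ℝ (⊤ : ℕ∞) (fun x => Real.exp ((-2)*μ x) * h 0 0 x) :=
      (smooth_exp_mul hμ _).mul (hsm 0 0)
    have hφd : ∀ q, pder 0 (fun x => Real.exp ((-2)*μ x) * h 0 0 x) q = 0
        ∧ pder 1 (fun x => Real.exp ((-2)*μ x) * h 0 0 x) q = 0 := by
      intro q
      have e1 := kE1 hK2 q
      have e3 := kE3 hK2 q
      have hbx := hbder 0 q
      constructor
      · rw [pder_mul (contDiff_diffAt (smooth_exp_mul hμ _) q) (hd 0 0 q), pder_exp hμ]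
        linear_combination Real.exp ((-2)*μ q) * e1 - 2 * Real.exp ((-2)*μ q) * pder 1 μ q * (hb0 q)
      · rw [pder_mul (contDiff_diffAt (smooth_exp_mul hμ _) q) (hd 0 0 q), pder_exp hμ]
        linear_combination Real.exp ((-2)*μ q) * e3
          - 2 * Real.exp ((-2)*μ q) * (hbx)
          - 2 * Real.exp ((-2)*μ q) * pder 0 μ q * (hb0 q)
          - 2 * Real.exp ((-2)*μ q) * pder 1 μ q * (hD0 q)
    have hφc := const_of_pder_zero hsmφ hφd
    apply hnc (Real.exp ((-2)*μ (0:ℝ×ℝ)) * h 0 0 (0:ℝ×ℝ))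
    intro i j q
    have key : Real.exp (2*μ q) * Real.exp ((-2)*μ q) = 1 := by
      rw [← Real.exp_add]; norm_num
    have hval : h 0 0 q = (Real.exp ((-2)*μ (0:ℝ×ℝ)) * h 0 0 (0:ℝ×ℝ)) * Real.exp (2*μ q) := by
      have e := hφc q 0
      linear_combination Real.exp (2*μ q) * e - h 0 0 q * key + Real.exp (2*μ q) * Real.exp ((-2)*μ q) * h 0 0 q * 0
    fin_cases i <;> fin_cases j
    · simpa using hval
    · simpa using hb0 q
    · simpa [hK2.1 1 0 q] using hb0 q
    · simpa [hD0 q] using hval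
  · -- main case
    refine ⟨(-A, -B), ?_, fun q => Real.exp ((-2)*μ q) * ((1/2) * (h 0 0 q + h 1 1 q)),
      (smooth_exp_mul hμ _).mul (contDiff_const.mul ((hsm 0 0).add (hsm 1 1))), ?_, ?_⟩
    · simp only [Ne, Prod.mk_eq_zero, neg_eq_zero]
      exact fun hc => hAB hc
    · intro q
      constructor
      · show Real.exp ((-2)*μ (q+γ₁)) * ((1/2) * (h 0 0 (q+γ₁) + h 1 1 (q+γ₁))) = _
        rw [(hμp q).1, (hp 0 0 q).1, (hp 1 1 q).1]
      · show Real.exp ((-2)*μ (q+γ₂)) * ((1/2) * (h 0 0 (q+γ₂) + h 1 1 (q+γ₂))) = _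
        rw [(hμp q).2, (hp 0 0 q).2, (hp 1 1 q).2]
    · intro q
      have e1 := kE1 hK2 q
      have e2 := kE2 hK2 q
      have e3 := kE3 hK2 q
      have e4 := kE4 hK2 q
      have hx := hbder 0 q
      have hy := hbder 1 q
      have hAq := hA q
      have hBq := hB q
      have hZX : Real.exp (2*μ q) * Real.exp ((-4)*μ q) = Real.exp ((-2)*μ q) := by
        rw [← Real.exp_add]; ring_nf
      have hT : ∀ p : Fin 2, pder p (fun x => Real.exp ((-2)*μ x) * ((1/2) * (h 0 0 x + h 1 1 x))) q
          = (-2) * pder p μ q * Real.exp ((-2)*μ q) * ((1/2) * (h 0 0 q + h 1 1 q))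
            + Real.exp ((-2)*μ q) * ((1/2) * (pder p (h 0 0) q + pder p (h 1 1) q)) := by
        intro p
        rw [pder_mul (contDiff_diffAt (smooth_exp_mul hμ _) q)
              (((hd 0 0 q).fun_add (hd 1 1 q)).const_mul (1/2)), pder_exp hμ,
            pder_const_mul ((hd 0 0 q).fun_add (hd 1 1 q)),
            pder_add (hd 0 0 q) (hd 1 1 q)]
      constructor
      · rw [hT 0]
        show _ = Real.exp (2*μ q) * ((-A) * pder 0 μ q + (-B) * pder 1 μ q)
        linear_combination (Real.exp ((-2)*μ q)/2) * e1 + (Real.exp ((-2)*μ q)/2) * e4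
          - Real.exp ((-2)*μ q) * hy
          - (Real.exp (2*μ q) * pder 0 μ q) * hAq
          - (Real.exp (2*μ q) * pder 1 μ q) * hBq
          + (pder 0 μ q * (h 0 0 q - h 1 1 q) + 2 * pder 1 μ q * h 0 1 q) * hZX
      · rw [hT 1]
        show _ = Real.exp (2*μ q) * ((-B) * pder 0 μ q - (-A) * pder 1 μ q)
        linear_combination (Real.exp ((-2)*μ q)/2) * e3 + (Real.exp ((-2)*μ q)/2) * e2
          - Real.exp ((-2)*μ q) * hx
          + (Real.exp (2*μ q) * pder 1 μ q) * hAq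
          - (Real.exp (2*μ q) * pder 0 μ q) * hBq
          + (2 * pder 0 μ q * h 0 1 q - pder 1 μ q * (h 0 0 q - h 1 1 q)) * hZX

end Part1

section Part2
open Real

lemma part2_forward (μ : ℝ × ℝ → ℝ) (hμ : ContDiff ℝ (⊤ : ℕ∞) μ)
    (v : ℝ × ℝ → ℝ) (hv : ContDiff ℝ (⊤ : ℕ∞) v)
    (hder : ∀ q, pder 0 v q = Real.exp (2 * μ q) * pder 0 μ q ∧
                 pder 1 v q = Real.exp (2 * μ q) * (-(pder 1 μ q))) :
    ∀ q, pder 0 (fun q' => pder 1 (fun q'' => Real.exp (2 * μ q'')) q') q = 0 := by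
  intro q
  have hG : ContDiff ℝ (⊤ : ℕ∞) (fun x => Real.exp (2 * μ x)) := smooth_exp_mul hμ 2
  have hv0 : pder 0 v = fun q' => (1/2) * pder 0 (fun x => Real.exp (2 * μ x)) q' := by
    funext q'
    rw [(hder q').1, pder_exp hμ 2]; ring
  have hv1 : pder 1 v = fun q' => (-(1/2)) * pder 1 (fun x => Real.exp (2 * μ x)) q' := by
    funext q'
    rw [(hder q').2, pder_exp hμ 2]; ring
  have h1 : pder 1 (pder 0 v) q
      = (1/2) * pder 1 (pder 0 (fun x => Real.exp (2 * μ x))) q := by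
    rw [hv0]
    exact pder_const_mul (contDiff_diffAt (pder_smooth hG 0) q) (1/2) 1
  have h2 : pder 0 (pder 1 v) q
      = (-(1/2)) * pder 0 (pder 1 (fun x => Real.exp (2 * μ x))) q := by
    rw [hv1]
    exact pder_const_mul (contDiff_diffAt (pder_smooth hG 1) q) (-(1/2)) 0
  have hcv := pder_comm hv q
  have hcG := pder_comm hG q
  show pder 0 (pder 1 (fun x => Real.exp (2 * μ x))) q = 0
  rw [h1, h2] at hcv
  rw [hcG] at hcv
  linarith

lemma part2_backward (γ₁ γ₂ : ℝ × ℝ) (hind : LinearIndependent ℝ ![γ₁, γ₂])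
    (μ : ℝ × ℝ → ℝ) (hμ : ContDiff ℝ (⊤ : ℕ∞) μ)
    (hμp : ∀ q, μ (q + γ₁) = μ q ∧ μ (q + γ₂) = μ q)
    (H : ∀ q, pder 0 (fun q' => pder 1 (fun q'' => Real.exp (2 * μ q'')) q') q = 0) :
    ∃ v : ℝ × ℝ → ℝ, ContDiff ℝ (⊤ : ℕ∞) v ∧
        (∀ q, v (q + γ₁) = v q ∧ v (q + γ₂) = v q) ∧
        ∀ q, pder 0 v q = Real.exp (2 * μ q) * pder 0 μ q ∧
             pder 1 v q = Real.exp (2 * μ q) * (-(pder 1 μ q)) := by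
  set G : ℝ × ℝ → ℝ := fun x => Real.exp (2 * μ x) with hGdef
  have hG : ContDiff ℝ (⊤ : ℕ∞) G := smooth_exp_mul hμ 2
  have H' : ∀ q, pder 0 (pder 1 G) q = 0 := H
  have H'' : ∀ q, pder 1 (pder 0 G) q = 0 := fun q => by
    rw [← pder_comm hG q]; exact H' q
  have hGper : ∀ q, G (q + γ₁) = G q ∧ G (q + γ₂) = G q := by
    intro q
    constructor
    · show Real.exp (2 * μ (q + γ₁)) = _
      rw [(hμp q).1]
    · show Real.exp (2 * μ (q + γ₂)) = _
      rw [(hμp q).2]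
  obtain ⟨C, hC⟩ := bounded_of_periodic γ₁ γ₂ hind G hG.continuous hGper
  -- ∂ₓG is independent of y, ∂_yG is independent of x
  have hderG0 : ∀ (x t : ℝ), HasDerivAt (fun s => pder 0 G (x, s))
      (pder 1 (pder 0 G) (x, t)) t := by
    intro x t
    have h1 : HasDerivAt (fun s : ℝ => ((x, s) : ℝ × ℝ)) ((0:ℝ), (1:ℝ)) t :=
      (hasDerivAt_const t x).prodMk (hasDerivAt_id t)
    have h2 := (contDiff_diffAt (pder_smooth hG 0) (x, t)).hasFDerivAt.comp_hasDerivAt t h1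
    simpa [pder1, Function.comp_def] using h2
  have hderG1 : ∀ (y t : ℝ), HasDerivAt (fun s => pder 1 G (s, y))
      (pder 0 (pder 1 G) (t, y)) t := by
    intro y t
    have h1 : HasDerivAt (fun s : ℝ => ((s, y) : ℝ × ℝ)) ((1:ℝ), (0:ℝ)) t :=
      (hasDerivAt_id t).prodMk (hasDerivAt_const t y)
    have h2 := (contDiff_diffAt (pder_smooth hG 1) (t, y)).hasFDerivAt.comp_hasDerivAt t h1
    simpa [pder0, Function.comp_def] using h2
  have hconst0 : ∀ x y y', pder 0 G (x, y) = pder 0 G (x, y') := by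
    intro x y y'
    exact is_const_of_deriv_eq_zero (f := fun s => pder 0 G (x, s))
      (fun t => (hderG0 x t).differentiableAt)
      (fun t => by rw [(hderG0 x t).deriv]; exact H'' (x, t)) y y'
  have hconst1 : ∀ x x' y, pder 1 G (x, y) = pder 1 G (x', y) := by
    intro x x' y
    exact is_const_of_deriv_eq_zero (f := fun s => pder 1 G (s, y))
      (fun t => (hderG1 y t).differentiableAt)
      (fun t => by rw [(hderG1 y t).deriv]; exact H' (t, y)) x x'
  -- decomposition G(x,y) = G(x,0) + G(0,y) - G(0,0)
  have hdercol : ∀ (x t : ℝ), HasDerivAt (fun s => G (x, s)) (pder 1 G (x, t)) t := by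
    intro x t
    have h1 : HasDerivAt (fun s : ℝ => ((x, s) : ℝ × ℝ)) ((0:ℝ), (1:ℝ)) t :=
      (hasDerivAt_const t x).prodMk (hasDerivAt_id t)
    have h2 := (contDiff_diffAt hG (x, t)).hasFDerivAt.comp_hasDerivAt t h1
    simpa [pder1, Function.comp_def] using h2
  have hdec : ∀ q : ℝ × ℝ, G q = G (q.1, 0) + G (0, q.2) - G (0, 0) := by
    intro q
    have hW : ∀ t, HasDerivAt (fun s => G (q.1, s) - G (0, s))
        (pder 1 G (q.1, t) - pder 1 G (0, t)) t :=
      fun t => (hdercol q.1 t).sub (hdercol 0 t)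
    have hcw := is_const_of_deriv_eq_zero (f := fun s => G (q.1, s) - G (0, s))
      (fun t => (hW t).differentiableAt)
      (fun t => by rw [(hW t).deriv, hconst1 q.1 0 t]; ring) q.2 0
    have hq : ((q.1, q.2) : ℝ × ℝ) = q := rfl
    rw [hq] at hcw
    linarith [hcw]
  -- transfer periodicity to the axes
  have transfer : ∀ γ : ℝ × ℝ, (∀ q, G (q + γ) = G q) →
      (∀ x, G (x + γ.1, 0) = G (x, 0)) ∧ (∀ y, G (0, y + γ.2) = G (0, y)) := by
    intro γ hper
    have hkey : ∀ x y, G (x + γ.1, 0) + G (0, y + γ.2) = G (x, 0) + G (0, y) := by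
      intro x y
      have h1 := hper (x, y)
      have hadd : ((x, y) : ℝ × ℝ) + γ = (x + γ.1, y + γ.2) := rfl
      rw [hadd] at h1
      have h2 := hdec (x + γ.1, y + γ.2)
      have h3 := hdec (x, y)
      simp only [] at h2 h3
      linarith
    have ha : ∀ x, G (x + γ.1, 0) = G (x, 0) - (G (0, γ.2) - G (0, 0)) := by
      intro x
      have e := hkey x 0
      rw [zero_add] at e
      linarith
    have hn : ∀ n : ℕ, G ((n : ℝ) * γ.1, 0) = G (0, 0) - n * (G (0, γ.2) - G (0, 0)) := by
      intro n
      induction n with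
      | zero => simp
      | succ m ih =>
        have e := ha ((m : ℝ) * γ.1)
        push_cast
        rw [show ((m : ℝ) + 1) * γ.1 = (m : ℝ) * γ.1 + γ.1 from by ring, e, ih]
        ring
    have hk0 : G (0, γ.2) - G (0, 0) = 0 := by
      by_contra hk
      obtain ⟨n, hn'⟩ := exists_nat_gt ((C + |G ((0:ℝ), (0:ℝ))|) / |G (0, γ.2) - G (0, 0)|)
      have h1 := hC ((n : ℝ) * γ.1, 0)
      rw [hn n, Real.norm_eq_abs] at h1
      have h2 : |(n : ℝ) * (G (0, γ.2) - G (0, 0))| - |G ((0:ℝ), (0:ℝ))|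
          ≤ |G ((0:ℝ), (0:ℝ)) - (n : ℝ) * (G (0, γ.2) - G (0, 0))| := by
        rw [abs_sub_comm]
        exact abs_sub_abs_le_abs_sub _ _
      rw [abs_mul, Nat.abs_cast] at h2
      rw [div_lt_iff₀ (abs_pos.mpr hk)] at hn'
      linarith
    refine ⟨fun x => by rw [ha x, hk0]; ring, fun y => ?_⟩
    have e := hkey 0 y
    have e2 := ha 0
    rw [hk0] at e2
    rw [e2] at e
    linarith
  obtain ⟨ha1, hb1⟩ := transfer γ₁ (fun q => (hGper q).1)
  obtain ⟨ha2, hb2⟩ := transfer γ₂ (fun q => (hGper q).2)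
  -- the potential
  refine ⟨fun q => (1/2) * (G (q.1, 0) - G (0, q.2)), ?_, ?_, ?_⟩
  · exact contDiff_const.mul ((hG.comp (contDiff_fst.prodMk contDiff_const)).sub
      (hG.comp (contDiff_const.prodMk contDiff_snd)))
  · intro q
    constructor
    · show (1/2) * (G ((q + γ₁).1, 0) - G (0, (q + γ₁).2)) = _
      have e1 : (q + γ₁).1 = q.1 + γ₁.1 := rfl
      have e2 : (q + γ₁).2 = q.2 + γ₁.2 := rfl
      rw [e1, e2, ha1 q.1, hb1 q.2]
    · show (1/2) * (G ((q + γ₂).1, 0) - G (0, (q + γ₂).2)) = _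
      have e1 : (q + γ₂).1 = q.1 + γ₂.1 := rfl
      have e2 : (q + γ₂).2 = q.2 + γ₂.2 := rfl
      rw [e1, e2, ha2 q.1, hb2 q.2]
  · intro q
    set L1 : (ℝ × ℝ) →L[ℝ] (ℝ × ℝ) := (ContinuousLinearMap.fst ℝ ℝ ℝ).prod 0 with hL1
    set L2 : (ℝ × ℝ) →L[ℝ] (ℝ × ℝ) := ContinuousLinearMap.prod 0 (ContinuousLinearMap.snd ℝ ℝ ℝ) with hL2
    have hF1 : HasFDerivAt (fun x : ℝ × ℝ => G (x.1, 0)) ((fderiv ℝ G (q.1, 0)).comp L1) q := by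
      have hout : HasFDerivAt G (fderiv ℝ G (q.1, 0)) (L1 q) := by
        have he : L1 q = (q.1, 0) := rfl
        rw [he]
        exact (contDiff_diffAt hG _).hasFDerivAt
      exact hout.comp q L1.hasFDerivAt
    have hF2 : HasFDerivAt (fun x : ℝ × ℝ => G (0, x.2)) ((fderiv ℝ G (0, q.2)).comp L2) q := by
      have hout : HasFDerivAt G (fderiv ℝ G (0, q.2)) (L2 q) := by
        have he : L2 q = (0, q.2) := rfl
        rw [he]
        exact (contDiff_diffAt hG _).hasFDerivAt
      exact hout.comp q L2.hasFDerivAt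
    have pA0 : pder 0 (fun x : ℝ × ℝ => G (x.1, 0)) q = pder 0 G (q.1, 0) := by
      rw [pder0, hF1.fderiv]; rfl
    have pA1 : pder 1 (fun x : ℝ × ℝ => G (x.1, 0)) q = 0 := by
      rw [pder1, hF1.fderiv]
      show fderiv ℝ G (q.1, 0) (L1 (0, 1)) = 0
      have he : L1 ((0 : ℝ), (1 : ℝ)) = 0 := rfl
      rw [he, map_zero]
    have pB0 : pder 0 (fun x : ℝ × ℝ => G (0, x.2)) q = 0 := by
      rw [pder0, hF2.fderiv]
      show fderiv ℝ G (0, q.2) (L2 (1, 0)) = 0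
      have he : L2 ((1 : ℝ), (0 : ℝ)) = 0 := rfl
      rw [he, map_zero]
    have pB1 : pder 1 (fun x : ℝ × ℝ => G (0, x.2)) q = pder 1 G (0, q.2) := by
      rw [pder1, hF2.fderiv]; rfl
    have hdiff1 : DifferentiableAt ℝ (fun x : ℝ × ℝ => G (x.1, 0)) q := hF1.differentiableAt
    have hdiff2 : DifferentiableAt ℝ (fun x : ℝ × ℝ => G (0, x.2)) q := hF2.differentiableAt
    have hGp : ∀ (p : Fin 2) q', pder p G q' = 2 * pder p μ q' * Real.exp (2 * μ q') := by
      intro p q'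
      rw [hGdef]
      exact pder_exp hμ 2 p q'
    constructor
    · rw [pder_const_mul (hdiff1.fun_sub hdiff2) (1/2) 0, pder_sub hdiff1 hdiff2 0, pA0, pB0]
      rw [show pder 0 G (q.1, 0) = pder 0 G (q.1, q.2) from hconst0 q.1 0 q.2]
      rw [show ((q.1, q.2) : ℝ × ℝ) = q from rfl, hGp 0 q]
      ring
    · rw [pder_const_mul (hdiff1.fun_sub hdiff2) (1/2) 1, pder_sub hdiff1 hdiff2 1, pA1, pB1]
      rw [show pder 1 G (0, q.2) = pder 1 G (q.1, q.2) from hconst1 0 q.1 q.2]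
      rw [show ((q.1, q.2) : ℝ × ℝ) = q from rfl, hGp 1 q]
      ring

end Part2
/-- If the torus `ℝ²/Γ` with metric `e^{2μ}(dx²+dy²)` admits an irreducible rank 2
Killing tensor field, then for some constant vector `c ≠ 0` the system
`vₓ = e^{2μ}(c¹μₓ + c²μ_y)`, `v_y = e^{2μ}(c²μₓ - c¹μ_y)` is solvable on the torus;
moreover for `c = (1,0)` the solvability of this system is equivalent to
`∂²(e^{2μ})/∂x∂y = 0`. -/
theorem stmt_15 (γ₁ γ₂ : ℝ × ℝ) (hind : LinearIndependent ℝ ![γ₁, γ₂])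
    (μ : ℝ × ℝ → ℝ) (hμ : ContDiff ℝ (⊤ : ℕ∞) μ)
    (hμp : ∀ q, μ (q + γ₁) = μ q ∧ μ (q + γ₂) = μ q)
    (h : Fin 2 → Fin 2 → ℝ × ℝ → ℝ) (hsm : ∀ i j, ContDiff ℝ (⊤ : ℕ∞) (h i j))
    (hp : ∀ i j q, h i j (q + γ₁) = h i j q ∧ h i j (q + γ₂) = h i j q)
    (hirr : Irreducible2 μ h) :
    (∃ c : ℝ × ℝ, c ≠ 0 ∧
      ∃ v : ℝ × ℝ → ℝ, ContDiff ℝ (⊤ : ℕ∞) v ∧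
        (∀ q, v (q + γ₁) = v q ∧ v (q + γ₂) = v q) ∧
        ∀ q, pder 0 v q = Real.exp (2 * μ q) * (c.1 * pder 0 μ q + c.2 * pder 1 μ q) ∧
             pder 1 v q = Real.exp (2 * μ q) * (c.2 * pder 0 μ q - c.1 * pder 1 μ q)) ∧
    ((∃ v : ℝ × ℝ → ℝ, ContDiff ℝ (⊤ : ℕ∞) v ∧
        (∀ q, v (q + γ₁) = v q ∧ v (q + γ₂) = v q) ∧
        ∀ q, pder 0 v q = Real.exp (2 * μ q) * pder 0 μ q ∧
             pder 1 v q = Real.exp (2 * μ q) * (-(pder 1 μ q))) ↔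
      ∀ q, pder 0 (fun q' => pder 1 (fun q'' => Real.exp (2 * μ q'')) q') q = 0) := by
  constructor
  · exact part1 γ₁ γ₂ hind μ hμ hμp h hsm hp hirr
  · constructor
    · rintro ⟨v, hv, _, hvd⟩ q
      exact part2_forward μ hμ v hv hvd q
    · intro H
      exact part2_backward γ₁ γ₂ hind μ hμ hμp H
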